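/- If ∇ ⊢ t₁ ≈ t₂ and ∇ ⊢ t₂ ≈ π • t₂, then ∇ ⊢ t₁ ≈ π • t₂. -/

import Mathlib

abbrev Atom := ℕ
abbrev Var := ℕ
abbrev Perm := List (Atom × Atom)

def swap (p : Atom × Atom) (a : Atom) : Atom :=
  if a = p.1 then p.2 else if a = p.2 then p.1 else a

def permAtom : Perm → Atom → Atom
  | [], a => a
  | p :: π, a => swap p (permAtom π a)

def ds (π π' : Perm) : Set Atom := {a | permAtom π a ≠ permAtom π' a}

inductive Trm : Type
  | unit : Trm
  | pair : Trm → Trm → Trm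
  | fn : ℕ → Trm → Trm
  | atom : Atom → Trm
  | abs : Atom → Trm → Trm
  | susp : Perm → Var → Trm

def permTrm (π : Perm) : Trm → Trm
  | .unit => .unit
  | .pair t₁ t₂ => .pair (permTrm π t₁) (permTrm π t₂)
  | .fn f t => .fn f (permTrm π t)
  | .atom a => .atom (permAtom π a)
  | .abs a t => .abs (permAtom π a) (permTrm π t)
  | .susp π' X => .susp (π ++ π') X

abbrev Env := Set (Atom × Var)

inductive fresh (Γ : Env) (a : Atom) : Trm → Prop
  | unit : fresh Γ a .unit
  | pair {t₁ t₂} : fresh Γ a t₁ → fresh Γ a t₂ → fresh Γ a (.pair t₁ t₂)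
  | fn {f t} : fresh Γ a t → fresh Γ a (.fn f t)
  | abs₁ {t} : fresh Γ a (.abs a t)
  | abs₂ {b t} : a ≠ b → fresh Γ a t → fresh Γ a (.abs b t)
  | atom {b} : a ≠ b → fresh Γ a (.atom b)
  | susp {π X} : (permAtom π.reverse a, X) ∈ Γ → fresh Γ a (.susp π X)

inductive equ (Γ : Env) : Trm → Trm → Prop
  | unit : equ Γ .unit .unit
  | pair {t₁ t₂ s₁ s₂} : equ Γ t₁ t₂ → equ Γ s₁ s₂ → equ Γ (.pair t₁ s₁) (.pair t₂ s₂)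
  | fn {f t₁ t₂} : equ Γ t₁ t₂ → equ Γ (.fn f t₁) (.fn f t₂)
  | abs₁ {a t₁ t₂} : equ Γ t₁ t₂ → equ Γ (.abs a t₁) (.abs a t₂)
  | abs₂ {a b t₁ t₂} : a ≠ b → fresh Γ a t₂ → equ Γ t₁ (permTrm [(a, b)] t₂) →
      equ Γ (.abs a t₁) (.abs b t₂)
  | atom {a} : equ Γ (.atom a) (.atom a)
  | susp {π π' X} : (∀ c ∈ ds π π', (c, X) ∈ Γ) → equ Γ (.susp π X) (.susp π' X)

inductive weak : Trm → Trm → Prop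
  | unit : weak .unit .unit
  | atom {a} : weak (.atom a) (.atom a)
  | fn {f t t'} : weak t t' → weak (.fn f t) (.fn f t')
  | pair {t₁ t₂ s₁ s₂} : weak t₁ s₁ → weak t₂ s₂ → weak (.pair t₁ t₂) (.pair s₁ s₂)
  | abs {a t t'} : weak t t' → weak (.abs a t) (.abs a t')
  | susp {π π' X} : ds π π' = ∅ → weak (.susp π X) (.susp π' X)

def subst (σ : Var → Option Trm) : Trm → Trm
  | .unit => .unit
  | .pair t₁ t₂ => .pair (subst σ t₁) (subst σ t₂)
  | .fn f t => .fn f (subst σ t)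
  | .atom a => .atom a
  | .abs a t => .abs a (subst σ t)
  | .susp π X =>
      match σ X with
      | some t => permTrm π t
      | none => .susp π X

/-! The claim is transitivity of `≈` at the middle term `t₂`, and transitivity holds at every
middle term, by induction on its size. The one case that is not structural is
`a.u₁ ≈ b.u₂ ≈ c.u₃`: it is reduced to `u₁ ≈ (a b)•u₂ ≈ (a b)•(b c)•u₃ ≈ (a c)•u₃`, where both
intermediate terms have the size of `u₂` and the last step holds because `(a b)(b c)` and `(a c)`
differ only at atoms fresh for `u₃`. That last step is an instance of `π•t ≈ π'•t` whenever
`ds π π'` is fresh for `t`, which rests on the equivariance of `#` and `≈` and on `≈` preserving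
freshness. -/

def permEquiv (π : Perm) : Equiv.Perm Atom :=
  (π.map fun p => Equiv.swap p.1 p.2).prod

lemma swap_eq_equivSwap (p : Atom × Atom) : swap p = Equiv.swap p.1 p.2 := by
  funext a
  simp [swap, Equiv.swap_apply_def]

lemma permAtom_eq_permEquiv (π : Perm) : permAtom π = permEquiv π := by
  induction π with
  | nil => rfl
  | cons p π ih =>
    funext a
    simp [permAtom, permEquiv, ih, swap_eq_equivSwap, Equiv.Perm.mul_apply]

lemma permEquiv_reverse (π : Perm) : permEquiv π.reverse = (permEquiv π)⁻¹ := by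
  simp [permEquiv, List.prod_inv_reverse, List.map_reverse, Function.comp_def, Equiv.swap_inv]

@[simp]
lemma permAtom_cons (p : Atom × Atom) (π : Perm) (a : Atom) :
    permAtom (p :: π) a = Equiv.swap p.1 p.2 (permAtom π a) := by
  rw [permAtom, swap_eq_equivSwap]

@[simp]
lemma permAtom_nil (a : Atom) : permAtom [] a = a := rfl

lemma permAtom_append (π π' : Perm) (a : Atom) :
    permAtom (π ++ π') a = permAtom π (permAtom π' a) := by
  induction π with
  | nil => rfl
  | cons p π ih => simp [ih]

lemma permAtom_injective (π : Perm) : Function.Injective (permAtom π) := by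
  rw [permAtom_eq_permEquiv]
  exact (permEquiv π).injective

@[simp]
lemma permAtom_reverse_permAtom (π : Perm) (a : Atom) :
    permAtom π.reverse (permAtom π a) = a := by
  simp [permAtom_eq_permEquiv, permEquiv_reverse]

@[simp]
lemma permAtom_permAtom_reverse (π : Perm) (a : Atom) :
    permAtom π (permAtom π.reverse a) = a := by
  simp [permAtom_eq_permEquiv, permEquiv_reverse]

lemma permAtom_reverse_congr {π π' : Perm} (h : permAtom π = permAtom π') :
    permAtom π.reverse = permAtom π'.reverse := by
  have : permEquiv π = permEquiv π' := Equiv.ext (by simpa [permAtom_eq_permEquiv] using congrFun h)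
  simp [permAtom_eq_permEquiv, permEquiv_reverse, this]

lemma permAtom_swap (π : Perm) (a b c : Atom) :
    permAtom π (Equiv.swap a b c) = Equiv.swap (permAtom π a) (permAtom π b) (permAtom π c) := by
  simp [permAtom_eq_permEquiv, Equiv.swap_apply_apply, Equiv.Perm.mul_apply]

lemma ds_eq_empty_iff {π π' : Perm} : ds π π' = ∅ ↔ permAtom π = permAtom π' := by
  simp [ds, Set.eq_empty_iff_forall_notMem, funext_iff]

lemma ds_append_left (ρ π π' : Perm) : ds (ρ ++ π) (ρ ++ π') = ds π π' := by
  ext c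
  simp [ds, permAtom_append, (permAtom_injective ρ).ne_iff]

lemma mem_ds_append_right {π π' ρ : Perm} {c : Atom} :
    c ∈ ds (π ++ ρ) (π' ++ ρ) ↔ permAtom ρ c ∈ ds π π' := by
  simp [ds, permAtom_append]

lemma ds_subset_union (π π' π'' : Perm) : ds π π'' ⊆ ds π π' ∪ ds π' π'' := fun c hc => by
  by_cases h : permAtom π c = permAtom π' c
  · exact .inr fun h' => hc (h.trans h')
  · exact .inl h

lemma permTrm_permTrm (π π' : Perm) (t : Trm) :
    permTrm π (permTrm π' t) = permTrm (π ++ π') t := by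
  induction t <;> simp [permTrm, permAtom_append, *]

lemma permTrm_nil (t : Trm) : permTrm [] t = t := by
  induction t <;> simp [permTrm, *]

-- Unlike `sizeOf`, this size ignores atoms and permutations, so it is invariant under `permTrm`.
def Trm.size : Trm → ℕ
  | .unit => 1
  | .pair t₁ t₂ => t₁.size + t₂.size + 1
  | .fn _ t => t.size + 1
  | .atom _ => 1
  | .abs _ t => t.size + 1
  | .susp _ _ => 1

@[simp]
lemma size_permTrm (π : Perm) (t : Trm) : (permTrm π t).size = t.size := by
  induction t <;> simp [permTrm, Trm.size, *]

lemma weak_permTrm_of_permAtom_eq {π π' : Perm} (h : permAtom π = permAtom π') (t : Trm) :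
    weak (permTrm π t) (permTrm π' t) := by
  induction t with
  | unit => exact .unit
  | pair _ _ ih₁ ih₂ => exact .pair ih₁ ih₂
  | fn _ _ ih => exact .fn ih
  | atom a => simp only [permTrm, h]; exact .atom
  | abs a _ ih => simp only [permTrm, h]; exact .abs ih
  | susp ρ X =>
    refine .susp (ds_eq_empty_iff.2 (funext fun c => ?_))
    simp [permAtom_append, h]

lemma weak.permTrm {t t' : Trm} (ρ : Perm) (h : weak t t') : weak (permTrm ρ t) (permTrm ρ t') := by
  induction h with
  | unit => exact .unit
  | atom => exact .atom
  | fn _ ih => exact .fn ih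
  | pair _ _ ih₁ ih₂ => exact .pair ih₁ ih₂
  | abs _ ih => exact .abs ih
  | susp h => exact .susp (by rwa [ds_append_left])

lemma fresh.weak {Γ : Env} {a : Atom} {t t' : Trm} (h : fresh Γ a t) (w : weak t t') :
    fresh Γ a t' := by
  induction w with
  | unit | atom => exact h
  | fn _ ih => cases h with | fn h => exact .fn (ih h)
  | pair _ _ ih₁ ih₂ => cases h with | pair h₁ h₂ => exact .pair (ih₁ h₁) (ih₂ h₂)
  | abs _ ih =>
    cases h with
    | abs₁ => exact .abs₁
    | abs₂ hne h => exact .abs₂ hne (ih h)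
  | susp hds =>
    cases h with
    | susp h => exact .susp (by rwa [← permAtom_reverse_congr (ds_eq_empty_iff.1 hds)])

lemma equ.weak {Γ : Env} {t s s' : Trm} (h : equ Γ t s) (w : weak s s') : equ Γ t s' := by
  induction h generalizing s' with
  | unit => cases w; exact .unit
  | atom => cases w; exact .atom
  | pair _ _ ih₁ ih₂ => cases w with | pair w₁ w₂ => exact .pair (ih₁ w₁) (ih₂ w₂)
  | fn _ ih => cases w with | fn w => exact .fn (ih w)
  | abs₁ _ ih => cases w with | abs w => exact .abs₁ (ih w)
  | abs₂ hne hf _ ih => cases w with | abs w => exact .abs₂ hne (hf.weak w) (ih (w.permTrm _))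
  | susp h =>
    cases w with
    | susp hds =>
      refine .susp fun c hc => h c ?_
      simpa [ds, ds_eq_empty_iff.1 hds] using hc

lemma fresh_abs_iff {Γ : Env} {a c : Atom} {t : Trm} :
    fresh Γ c (.abs a t) ↔ c = a ∨ fresh Γ c t := by
  constructor
  · intro h
    cases h with
    | abs₁ => exact .inl rfl
    | abs₂ _ h => exact .inr h
  · rintro (rfl | h)
    · exact .abs₁
    · rcases eq_or_ne c a with rfl | hca
      exacts [.abs₁, .abs₂ hca h]

lemma fresh.permTrm {Γ : Env} {a : Atom} {t : Trm} (π : Perm) (h : fresh Γ a t) :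
    fresh Γ (permAtom π a) (permTrm π t) := by
  induction h with
  | unit => exact .unit
  | pair _ _ ih₁ ih₂ => exact .pair ih₁ ih₂
  | fn _ ih => exact .fn ih
  | abs₁ => exact .abs₁
  | abs₂ hne _ ih => exact .abs₂ ((permAtom_injective π).ne hne) ih
  | atom hne => exact .atom ((permAtom_injective π).ne hne)
  | susp h => exact .susp (by simpa [permAtom_append] using h)

lemma fresh_permTrm_iff {Γ : Env} {a : Atom} {t : Trm} (π : Perm) :
    fresh Γ (permAtom π a) (permTrm π t) ↔ fresh Γ a t := by
  refine ⟨fun h => ?_, fresh.permTrm π⟩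
  have h' := h.permTrm π.reverse
  rw [permAtom_reverse_permAtom, permTrm_permTrm] at h'
  simpa [permTrm_nil] using h'.weak (weak_permTrm_of_permAtom_eq (π' := [])
    (by funext; simp [permAtom_append]) t)

lemma fresh_swap_iff_of_ne {Γ : Env} {a b c : Atom} {t : Trm} (ha : c ≠ a) (hb : c ≠ b) :
    fresh Γ c (permTrm [(a, b)] t) ↔ fresh Γ c t := by
  simpa [Equiv.swap_apply_of_ne_of_ne ha hb] using fresh_permTrm_iff (Γ := Γ) (a := c) (t := t) [(a, b)]

lemma fresh.equ {Γ : Env} {a : Atom} {t s : Trm} (hf : fresh Γ a t) (h : equ Γ t s) :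
    fresh Γ a s := by
  induction h generalizing a with
  | unit | atom => exact hf
  | pair _ _ ih₁ ih₂ => cases hf with | pair h₁ h₂ => exact .pair (ih₁ h₁) (ih₂ h₂)
  | fn _ ih => cases hf with | fn h => exact .fn (ih h)
  | abs₁ _ ih => exact fresh_abs_iff.2 ((fresh_abs_iff.1 hf).imp_right ih)
  | @abs₂ b c t₁ t₂ hne hb _ ih =>
    by_cases hab : a = b
    · subst hab
      exact .abs₂ hne hb
    by_cases hac : a = c
    · subst hac
      exact .abs₁
    have := (fresh_abs_iff.1 hf).resolve_left hab
    exact .abs₂ hac ((fresh_swap_iff_of_ne hab hac).1 (ih this))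
  | @susp π π' X h =>
    cases hf with
    | susp hf =>
      by_cases heq : permAtom π.reverse a = permAtom π'.reverse a
      · exact .susp (heq ▸ hf)
      · refine .susp (h _ fun he => heq ?_)
        simpa using (congrArg (permAtom π.reverse) he).symm

lemma equ.permTrm {Γ : Env} {t s : Trm} (π : Perm) (h : equ Γ t s) :
    equ Γ (permTrm π t) (permTrm π s) := by
  induction h with
  | unit => exact .unit
  | atom => exact .atom
  | pair _ _ ih₁ ih₂ => exact .pair ih₁ ih₂
  | fn _ ih => exact .fn ih
  | abs₁ _ ih => exact .abs₁ ih
  | @abs₂ a b t₁ t₂ hne hf _ ih =>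
    refine .abs₂ ((permAtom_injective π).ne hne) (hf.permTrm π) ?_
    rw [permTrm_permTrm] at ih ⊢
    refine ih.weak (weak_permTrm_of_permAtom_eq (funext fun c => ?_) t₂)
    simp [permAtom_append, permAtom_swap]
  | susp h => exact .susp (by rwa [ds_append_left])

lemma equ.size_eq {Γ : Env} {t s : Trm} (h : equ Γ t s) : t.size = s.size := by
  induction h <;> simp [Trm.size, *]

lemma equ_abs_iff {Γ : Env} {a c : Atom} {u v : Trm} :
    equ Γ (.abs a u) (.abs c v) ↔ equ Γ u (permTrm [(a, c)] v) ∧ (a ≠ c → fresh Γ a v) := by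
  have hw : permAtom [(a, a)] = permAtom [] := by funext; simp
  constructor
  · intro h
    cases h with
    | abs₁ h =>
      refine ⟨h.weak ?_, fun h => absurd rfl h⟩
      simpa [permTrm_nil] using weak_permTrm_of_permAtom_eq hw.symm v
    | abs₂ _ hf h => exact ⟨h, fun _ => hf⟩
  · rintro ⟨h, hf⟩
    by_cases hac : a = c
    · subst hac
      refine .abs₁ (h.weak ?_)
      simpa [permTrm_nil] using weak_permTrm_of_permAtom_eq hw v
    · exact .abs₂ hac (hf hac) h

lemma equ_permTrm_of_fresh {Γ : Env} (t : Trm) (π π' : Perm) (h : ∀ a ∈ ds π π', fresh Γ a t) :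
    equ Γ (permTrm π t) (permTrm π' t) := by
  induction t generalizing π π' with
  | unit => exact .unit
  | pair t₁ t₂ ih₁ ih₂ =>
    exact .pair (ih₁ π π' fun a ha => by cases h a ha; assumption)
      (ih₂ π π' fun a ha => by cases h a ha; assumption)
  | fn f t ih => exact .fn (ih π π' fun a ha => by cases h a ha; assumption)
  | atom a =>
    by_cases heq : permAtom π a = permAtom π' a
    · simp only [permTrm, heq]
      exact .atom
    · cases h a heq with | atom hne => exact absurd rfl hne
  | abs a u ih =>
    have hu : ∀ d ∈ ds π π', d ≠ a → fresh Γ d u := fun d hd hda =>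
      (fresh_abs_iff.1 (h d hd)).resolve_left hda
    simp only [permTrm]
    refine equ_abs_iff.2 ⟨?_, fun hne => ?_⟩
    · rw [permTrm_permTrm]
      refine ih _ _ fun d hd => ?_
      change permAtom π d ≠ Equiv.swap _ _ (permAtom π' d) at hd
      have hda : d ≠ a := by
        rintro rfl
        exact hd (Equiv.swap_apply_right _ _).symm
      refine hu d (fun he => hd ?_) hda
      have hd' : permAtom π d ≠ permAtom π' a := by
        rw [he]
        exact (permAtom_injective π').ne hda
      rw [← he, Equiv.swap_apply_of_ne_of_ne ((permAtom_injective π).ne hda) hd']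
    · obtain ⟨d, hd⟩ : ∃ d, permAtom π' d = permAtom π a := ⟨_, permAtom_permAtom_reverse π' _⟩
      have hda : d ≠ a := fun hda => hne (by rw [← hd, hda])
      have hd_mem : d ∈ ds π π' := by
        change permAtom π d ≠ permAtom π' d
        rw [hd]
        exact (permAtom_injective π).ne hda
      rw [← hd]
      exact (hu d hd_mem hda).permTrm π'
  | susp ρ X =>
    refine .susp fun c hc => ?_
    cases h _ (mem_ds_append_right.1 hc) with
    | susp h => simpa using h

lemma swap_swap_apply_eq_swap_apply {a b c d : Atom} (hda : d = a → a = c) (hdb : d = b → b = c) :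
    Equiv.swap a b (Equiv.swap b c d) = Equiv.swap a c d := by
  simp only [Equiv.swap_apply_def]
  split_ifs <;> grind

lemma equ_abs_trans {Γ : Env} {b : Atom} {t₁ u₂ t₃ : Trm}
    (trans : ∀ {s₁ s₂ s₃ : Trm}, s₂.size = u₂.size → equ Γ s₁ s₂ → equ Γ s₂ s₃ → equ Γ s₁ s₃)
    (h₁₂ : equ Γ t₁ (.abs b u₂)) (h₂₃ : equ Γ (.abs b u₂) t₃) : equ Γ t₁ t₃ := by
  obtain ⟨a, u₁, rfl⟩ : ∃ a u₁, t₁ = .abs a u₁ := by cases h₁₂ <;> exact ⟨_, _, rfl⟩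
  obtain ⟨c, u₃, rfl⟩ : ∃ c u₃, t₃ = .abs c u₃ := by cases h₂₃ <;> exact ⟨_, _, rfl⟩
  obtain ⟨hu₁₂, ha⟩ := equ_abs_iff.1 h₁₂
  obtain ⟨hu₂₃, hb⟩ := equ_abs_iff.1 h₂₃
  have ha₃ : a ≠ c → fresh Γ a u₃ := fun hac => by
    by_cases hab : a = b
    · subst hab
      exact hb hac
    · exact (fresh_swap_iff_of_ne hab hac).1 ((ha hab).equ hu₂₃)
  have hswap : equ Γ (permTrm [(a, b)] (permTrm [(b, c)] u₃)) (permTrm [(a, c)] u₃) := by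
    rw [permTrm_permTrm]
    refine equ_permTrm_of_fresh u₃ _ _ fun d hd => ?_
    by_cases hda : d = a ∧ a ≠ c
    · exact hda.1 ▸ ha₃ hda.2
    by_cases hdb : d = b ∧ b ≠ c
    · exact hdb.1 ▸ hb hdb.2
    refine absurd ?_ hd
    simpa [permAtom_append] using swap_swap_apply_eq_swap_apply (not_and_not_right.1 hda)
      (not_and_not_right.1 hdb)
  refine equ_abs_iff.2 ⟨trans ?_ (trans ?_ hu₁₂ (hu₂₃.permTrm [(a, b)])) hswap, ha₃⟩
  · simpa using hu₂₃.size_eq.symm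
  · simp

theorem equ_trans {Γ : Env} {t₁ t₂ t₃ : Trm} (h₁₂ : equ Γ t₁ t₂) (h₂₃ : equ Γ t₂ t₃) :
    equ Γ t₁ t₃ := by
  cases t₂ with
  | unit => cases h₁₂; exact h₂₃
  | atom => cases h₁₂; exact h₂₃
  | pair =>
    cases h₁₂ with | pair hv hw =>
    cases h₂₃ with | pair hv' hw' =>
    exact .pair (equ_trans hv hv') (equ_trans hw hw')
  | fn =>
    cases h₁₂ with | fn hv =>
    cases h₂₃ with | fn hv' =>
    exact .fn (equ_trans hv hv')
  | abs => exact equ_abs_trans (fun _ h h' => equ_trans h h') h₁₂ h₂₃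
  | susp =>
    cases h₁₂ with | susp h =>
    cases h₂₃ with | susp h' =>
    exact .susp fun c hc => (ds_subset_union _ _ _ hc).elim (h c) (h' c)
termination_by t₂.size
decreasing_by all_goals simp_all [Trm.size]

theorem equ_trans_perm (Γ : Env) (t₁ t₂ : Trm) (π : Perm)
    (h₁ : equ Γ t₁ t₂) (h₂ : equ Γ t₂ (permTrm π t₂)) :
    equ Γ t₁ (permTrm π t₂) :=
  equ_trans h₁ h₂
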